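/- arXiv:0705.4081 — 2 statements merged into one kernel-verified Lean document; each statement's English description precedes it below -/
import Mathlib

section
/- The subsets V_1 and V_2 of the unit sphere S^5 in C^3 are disjoint, where V_1 = { A^k z : 0 ≤ k ≤ 2, z ∈ S^5, |z_2|² + |z_3|² ≤ ε } with A the cyclic permutation matrix of coordinates, V_2 = P·V_1, 0 < ε < 1/9, and P = (1/√3)·[[1, ω, 1],[1, 1, ω],[ω, 1, 1]] with ω = e^{2πi/3}. -/
open Complex Matrix

noncomputable def ω : ℂ := Complex.exp (2 * Real.pi * Complex.I / 3)

def A : Matrix (Fin 3) (Fin 3) ℂ := !![0, 1, 0; 0, 0, 1; 1, 0, 0]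

noncomputable def P : Matrix (Fin 3) (Fin 3) ℂ :=
  ((Real.sqrt 3 : ℂ)⁻¹) • !![1, ω, 1; 1, 1, ω; ω, 1, 1]

/-- The subset `V₁` of the unit sphere `S⁵ ⊆ ℂ³`. -/
noncomputable def V₁ (ε : ℝ) : Set (Fin 3 → ℂ) :=
  { w | ∃ k : ℕ, k ≤ 2 ∧ ∃ z : Fin 3 → ℂ, (∑ i, ‖z i‖ ^ 2) = 1 ∧
      ‖z 1‖ ^ 2 + ‖z 2‖ ^ 2 ≤ ε ∧ w = (A ^ k).mulVec z }

/-- The subset `V₂ = P · V₁`. -/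
noncomputable def V₂ (ε : ℝ) : Set (Fin 3 → ℂ) := (fun z => P.mulVec z) '' V₁ ε

/-! A point of `V₁` has a coordinate of squared modulus at least `1 - ε`, because `A` only
permutes coordinates, and its coordinates have moduli summing to at most `1 + √(2ε)`. Every
entry of `P` has modulus `1 / √3`, so every coordinate of a point of `V₂` has modulus at most
`(1 + √(2ε)) / √3`. For `ε < 1/9` this is incompatible: `(1 + √(2ε))² / 3 < 3/4 < 1 - ε`. -/

theorem Matrix.pow_mulVec_eq_comp_iterate {n R : Type*} [Fintype n] [DecidableEq n] [Semiring R]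
    {M : Matrix n n R} {f : n → n} (hM : ∀ z, M *ᵥ z = z ∘ f) (k : ℕ) (z : n → R) :
    (M ^ k) *ᵥ z = z ∘ f^[k] := by
  induction k generalizing z with
  | zero => simp
  | succ k ih => rw [pow_succ, ← mulVec_mulVec, ih, hM, Function.iterate_succ', Function.comp_assoc]

theorem Matrix.norm_mulVec_apply_le {m n R : Type*} [Fintype n] [SeminormedRing R]
    {M : Matrix m n R} {c : ℝ} (hM : ∀ i j, ‖M i j‖ ≤ c) (v : n → R) (i : m) :
    ‖(M *ᵥ v) i‖ ≤ c * ∑ j, ‖v j‖ := by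
  rw [Finset.mul_sum]
  refine (norm_sum_le _ _).trans (Finset.sum_le_sum fun j _ => ?_)
  exact (norm_mul_le _ _).trans (mul_le_mul_of_nonneg_right (hM i j) (norm_nonneg _))

theorem norm_ω : ‖ω‖ = 1 := by
  simp [ω, Complex.norm_exp]

theorem A_mulVec (z : Fin 3 → ℂ) : A *ᵥ z = z ∘ (· + 1) := by
  ext i
  fin_cases i <;> simp [A, mulVec, dotProduct, Fin.sum_univ_three]

theorem norm_P_apply (i j : Fin 3) : ‖P i j‖ = (√3)⁻¹ := by
  fin_cases i <;> fin_cases j <;> simp [P, norm_ω]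

theorem exists_eq_comp_of_mem_V₁ {ε : ℝ} {w : Fin 3 → ℂ} (hw : w ∈ V₁ ε) :
    ∃ z : Fin 3 → ℂ, ∃ σ : Fin 3 → Fin 3, σ.Bijective ∧ (∑ i, ‖z i‖ ^ 2) = 1 ∧
      ‖z 1‖ ^ 2 + ‖z 2‖ ^ 2 ≤ ε ∧ w = z ∘ σ := by
  obtain ⟨k, -, z, hz, hzε, rfl⟩ := hw
  exact ⟨z, _, (Equiv.addRight 1).bijective.iterate k, hz, hzε,
    pow_mulVec_eq_comp_iterate A_mulVec k z⟩

theorem exists_sq_norm_ge_of_mem_V₁ {ε : ℝ} {w : Fin 3 → ℂ} (hw : w ∈ V₁ ε) :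
    ∃ i, 1 - ε ≤ ‖w i‖ ^ 2 := by
  obtain ⟨z, σ, hσ, hz, hzε, rfl⟩ := exists_eq_comp_of_mem_V₁ hw
  obtain ⟨i, hi⟩ := hσ.surjective 0
  refine ⟨i, ?_⟩
  rw [Fin.sum_univ_three] at hz
  simp only [Function.comp_apply, hi]
  linarith

theorem sum_norm_le_of_mem_V₁ {ε : ℝ} {w : Fin 3 → ℂ} (hw : w ∈ V₁ ε) :
    ∑ i, ‖w i‖ ≤ 1 + √(2 * ε) := by
  obtain ⟨z, σ, hσ, hz, hzε, rfl⟩ := exists_eq_comp_of_mem_V₁ hw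
  rw [Fin.sum_univ_three] at hz
  have h0 : ‖z 0‖ ≤ 1 := by
    nlinarith [norm_nonneg (z 0), sq_nonneg ‖z 1‖, sq_nonneg ‖z 2‖]
  have h12 : ‖z 1‖ + ‖z 2‖ ≤ √(2 * ε) :=
    Real.le_sqrt_of_sq_le (by nlinarith [add_sq_le (a := ‖z 1‖) (b := ‖z 2‖)])
  rw [Function.comp_def, hσ.sum_comp (fun i => ‖z i‖), Fin.sum_univ_three]
  linarith

theorem norm_P_mulVec_apply_le (v : Fin 3 → ℂ) (i : Fin 3) :
    ‖(P *ᵥ v) i‖ ≤ (∑ j, ‖v j‖) / √3 := by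
  rw [div_eq_inv_mul]
  exact norm_mulVec_apply_le (fun i j => (norm_P_apply i j).le) v i

theorem V₁_disjoint_V₂_general (ε : ℝ) (hε' : ε < 1 / 9) :
    Disjoint (V₁ ε) (V₂ ε) := by
  rw [Set.disjoint_left]
  rintro w hw ⟨v, hv, rfl⟩
  obtain ⟨i, hi⟩ := exists_sq_norm_ge_of_mem_V₁ hw
  have hs : √(2 * ε) < 1 / 2 := (Real.sqrt_lt' (by norm_num)).2 (by linarith)
  have hPv : ‖(P *ᵥ v) i‖ ≤ (1 + √(2 * ε)) / √3 :=
    (norm_P_mulVec_apply_le v i).trans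
      (div_le_div_of_nonneg_right (sum_norm_le_of_mem_V₁ hv) (Real.sqrt_nonneg 3))
  have h3 : √3 ^ 2 = 3 := Real.sq_sqrt (by norm_num)
  have hPv_sq : ‖(P *ᵥ v) i‖ ^ 2 ≤ (1 + √(2 * ε)) ^ 2 / 3 := by
    rw [← h3, ← div_pow]
    exact pow_le_pow_left₀ (norm_nonneg _) hPv 2
  nlinarith [Real.sqrt_nonneg (2 * ε)]

theorem V₁_disjoint_V₂ (ε : ℝ) (hε : 0 < ε) (hε' : ε < 1 / 9) :
    Disjoint (V₁ ε) (V₂ ε) :=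
  V₁_disjoint_V₂_general ε hε'
end

section
/- Let G be a finite group of odd order n, and let N = Σ_{g∈G} g ∈ ZG. Then the ZG-submodule ⟨2, N⟩ of ZG generated by 2 and N is a projective ZG-module. -/
open MonoidAlgebra

/-!
The surjection `ℤG × ℤG → ⟨2, N⟩, (x, y) ↦ x·2 + y·N` splits. Indeed `2N ∈ ℤG·2` and
`N - N² = (1 - n)N ∈ ℤG·2` because `N² = nN` with `n` odd, so `r - rN ∈ ℤG·2` for every
`r ∈ ⟨2, N⟩`. As `ℤG` is torsion-free, `r ↦ ((r - rN)/2, r)` is a well-defined linear section.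
-/

open LinearMap Submodule in
theorem Module.Projective.span_pair_of_isRightRegular {R : Type*} [Ring R] {a b : R}
    (ha : IsRightRegular a) (hab : a * b ∈ R ∙ a) (hbb : b - b * b ∈ R ∙ a) :
    Module.Projective R (span R ({a, b} : Set R)) := by
  set I := span R ({a, b} : Set R)
  let T : I →ₗ[R] R := (LinearMap.id - toSpanSingleton R R b) ∘ₗ I.subtype
  have hT (x : I) : T x ∈ range (toSpanSingleton R R a) := by
    have : I.map (LinearMap.id - toSpanSingleton R R b) ≤ R ∙ a := by
      rw [Submodule.map_span, span_le, Set.image_pair, Set.pair_subset_iff]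
      exact ⟨sub_mem (mem_span_singleton_self a) hab, hbb⟩
    exact span_singleton_eq_range R R a ▸ this (mem_map_of_mem x.2)
  let e := LinearEquiv.ofInjective (toSpanSingleton R R a) fun _ _ h => ha h
  let s : R × R →ₗ[R] I := codRestrict I (coprod (toSpanSingleton R R a) (toSpanSingleton R R b))
    fun p => add_mem (smul_mem _ _ (subset_span (by simp))) (smul_mem _ _ (subset_span (by simp)))
  refine .of_split ((e.symm ∘ₗ T.codRestrict _ hT).prod I.subtype) s
    (LinearMap.ext fun x => Subtype.ext ?_)
  have hy : (e.symm ⟨T x, hT x⟩ : R) * a = T x := congrArg Subtype.val (e.apply_symm_apply _)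
  change e.symm ⟨T x, hT x⟩ * a + x * b = x
  rw [hy]
  exact sub_add_cancel _ _

theorem isRightRegular_two {R : Type*} [Ring R] [IsAddTorsionFree R] : IsRightRegular (2 : R) :=
  fun x y h => by
    simp only [mul_two, ← two_nsmul] at h
    exact nsmul_right_injective two_ne_zero h

namespace MonoidAlgebra

instance instIsAddTorsionFree (k G : Type*) [Semiring k] [IsAddTorsionFree k] :
    IsAddTorsionFree (MonoidAlgebra k G) :=
  coeff_injective.isAddTorsionFree coeffAddEquiv.toAddMonoidHom

variable (k G : Type*) [Semiring k] [Group G] [Fintype G]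

theorem of_mul_sum_of (g : G) : of k G g * ∑ h, of k G h = ∑ h, of k G h := by
  rw [Finset.mul_sum]
  exact Fintype.sum_bijective (g * ·) (Group.mulLeft_bijective g) _ _ fun h => (map_mul ..).symm

theorem sum_of_mul_sum_of :
    (∑ g, of k G g) * ∑ g, of k G g = Fintype.card G • ∑ g, of k G g := by
  rw [Finset.sum_mul]
  simp only [of_mul_sum_of, Finset.sum_const, Finset.card_univ]

end MonoidAlgebra

/-- For a finite group `G` of odd order, the left ideal `⟨2, N⟩ ⊆ ℤG` generated by `2` and
the norm element `N = Σ_{g ∈ G} g` is a projective `ℤG`-module. -/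
theorem span_two_norm_projective (G : Type*) [Group G] [Fintype G]
    (hodd : Odd (Fintype.card G)) :
    Module.Projective (MonoidAlgebra ℤ G)
      (Submodule.span (MonoidAlgebra ℤ G)
        ({2, ∑ g : G, MonoidAlgebra.of ℤ G g} : Set (MonoidAlgebra ℤ G))) := by
  set N := ∑ g : G, of ℤ G g
  obtain ⟨m, hm⟩ := hodd
  refine .span_pair_of_isRightRegular isRightRegular_two ?_ ?_
  · rw [(Commute.ofNat_left 2 N).eq]
    exact Submodule.smul_mem _ N (Submodule.mem_span_singleton_self 2)
  · refine Submodule.mem_span_singleton.mpr ⟨-(m • N), ?_⟩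
    rw [sum_of_mul_sum_of, hm, smul_eq_mul, neg_mul, smul_mul_assoc, mul_two]
    module
end
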